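/- arXiv:1007.1350 — 2 statements merged into one kernel-verified Lean document; each statement's English description precedes it below -/
import Mathlib

section
/- Let W be a finite group acting linearly on a complex vector space V, let w ∈ W, and let v₁, v₂ be eigenvectors of w with eigenvalues λ₁, λ₂ respectively. If f is a homogeneous W-invariant polynomial of degree d, then λ₂ · D_{v₂}(f)(v₁) = λ₁^{1−d} · D_{v₂}(f)(v₁), where D_{v₂}(f) denotes the directional derivative of f in direction v₂. -/
/-- Denef–Loeser: if `v₁, v₂` are eigenvectors of `w ∈ W` with
eigenvalues `λ₁, λ₂` and `f` is a homogeneous `W`-invariant polynomial function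
of degree `d`, then `λ₂ • D_{v₂}(f)(v₁) = λ₁^(1-d) • D_{v₂}(f)(v₁)`. -/
theorem stmt1 {V : Type*} [NormedAddCommGroup V] [NormedSpace ℂ V] [FiniteDimensional ℂ V]
    (W : Subgroup (LinearMap.GeneralLinearGroup ℂ V)) [Finite W]
    (w : W) (v₁ v₂ : V) (lam₁ lam₂ : ℂ) (d : ℕ)
    (h₁ : ((w : LinearMap.GeneralLinearGroup ℂ V) : V →ₗ[ℂ] V) v₁ = lam₁ • v₁)
    (h₂ : ((w : LinearMap.GeneralLinearGroup ℂ V) : V →ₗ[ℂ] V) v₂ = lam₂ • v₂)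
    (f : V → ℂ)
    (hpoly : ∃ p : MvPolynomial (Module.Dual ℂ V) ℂ,
      ∀ v : V, MvPolynomial.eval (fun φ => φ v) p = f v)
    (hinv : ∀ u ∈ W, ∀ v : V, f (((u : LinearMap.GeneralLinearGroup ℂ V) : V →ₗ[ℂ] V) v) = f v)
    (hhom : ∀ (c : ℂ) (v : V), f (c • v) = c ^ d * f v) :
    lam₂ * lineDeriv ℂ f v₁ v₂ = lam₁ ^ (1 - (d : ℤ)) * lineDeriv ℂ f v₁ v₂ := by
  have hlD : lineDeriv ℂ f v₁ v₂ = deriv (fun t : ℂ => f (v₁ + t • v₂)) 0 := rfl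
  -- invariance under w
  have hw : ∀ v : V, f (((w : LinearMap.GeneralLinearGroup ℂ V) : V →ₗ[ℂ] V) v) = f v :=
    hinv w w.2
  have hlam2 : lam₂ ^ d * f v₂ = f v₂ := by
    have := hw v₂
    rw [h₂, hhom] at this
    exact this
  by_cases hl1 : lam₁ = 0
  · -- then v₁ = 0
    have hv₁ : v₁ = 0 := by
      have hinj : Function.Injective ((w : LinearMap.GeneralLinearGroup ℂ V) : V →ₗ[ℂ] V) :=
        (LinearMap.GeneralLinearGroup.toLinearEquiv
          (w : LinearMap.GeneralLinearGroup ℂ V)).injective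
      apply hinj
      simp [h₁, hl1]
    subst hv₁
    have hg : (fun t : ℂ => f (0 + t • v₂)) = fun t : ℂ => t ^ d * f v₂ := by
      funext t
      rw [zero_add, hhom]
    have hD : lineDeriv ℂ f 0 v₂ = (d : ℂ) * 0 ^ (d - 1) * f v₂ := by
      rw [hlD, hg]
      exact ((hasDerivAt_pow d (0:ℂ)).mul_const (f v₂)).deriv
    rcases Nat.eq_zero_or_pos d with hd | hd
    · subst hd
      simp [hD]
    rcases eq_or_lt_of_le (show 1 ≤ d from hd) with hd1 | hd2
    · -- d = 1
      have hd1' : d = 1 := hd1.symm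
      subst hd1'
      rw [hD]
      simp only [Nat.cast_one, pow_zero, mul_one, one_mul, Nat.sub_self, sub_self, zpow_zero]
      simpa using hlam2
    · -- d ≥ 2
      have : (0 : ℂ) ^ (d - 1) = 0 := by
        apply zero_pow
        omega
      rw [hD, this]
      ring
  · -- main case
    obtain ⟨p, hp⟩ := hpoly
    set g : ℂ → ℂ := fun t => f (v₁ + t • v₂) with hgdef
    have hdiff : Differentiable ℂ g := by
      have key : ∀ q : MvPolynomial (Module.Dual ℂ V) ℂ,
          Differentiable ℂ (fun t : ℂ => MvPolynomial.eval (fun φ => φ (v₁ + t • v₂)) q) := by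
        intro q
        induction q using MvPolynomial.induction_on with
        | C a => simpa using differentiable_const (a : ℂ)
        | add p q hp' hq' => simp only [MvPolynomial.eval_add]; exact hp'.add hq'
        | mul_X q φ hq' =>
          simp only [MvPolynomial.eval_mul, MvPolynomial.eval_X]
          refine hq'.mul ?_
          have : (fun t : ℂ => φ (v₁ + t • v₂)) = fun t : ℂ => φ v₁ + t * φ v₂ := by
            funext t
            simp [map_add, map_smul, smul_eq_mul]
          rw [this]
          exact (differentiable_id.mul (differentiable_const _)).const_add _
      have : g = fun t : ℂ => MvPolynomial.eval (fun φ => φ (v₁ + t • v₂)) p := by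
        funext t; rw [hgdef]; exact (hp _).symm
      rw [this]
      exact key p
    set c : ℂ := lam₂ / lam₁ with hc
    have hkey : ∀ t : ℂ, g t = lam₁ ^ d * g (c * t) := by
      intro t
      have : lam₁ ^ d * g (c * t) = f (lam₁ • (v₁ + (c * t) • v₂)) := (hhom _ _).symm
      rw [this]
      have heq : lam₁ • (v₁ + (c * t) • v₂)
          = ((w : LinearMap.GeneralLinearGroup ℂ V) : V →ₗ[ℂ] V) (v₁ + t • v₂) := by
        rw [map_add, h₁, map_smul, h₂]
        rw [smul_add, smul_smul, smul_smul]
        have hs : lam₁ * (c * t) = t * lam₂ := by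
          rw [hc]; field_simp
        rw [hs]
      rw [heq, hw]
    set D : ℂ := deriv g 0 with hD
    have h1 : HasDerivAt g D 0 := (hdiff 0).hasDerivAt
    have h2 : HasDerivAt (fun t => lam₁ ^ d * g (c * t)) (lam₁ ^ d * (D * c)) 0 := by
      have hi : HasDerivAt (fun t : ℂ => c * t) c 0 := by
        simpa using (hasDerivAt_id (0:ℂ)).const_mul c
      have h1' : HasDerivAt g D (c * 0) := by simpa using h1
      exact (h1'.comp 0 hi).const_mul (lam₁ ^ d)
    have heqfun : g = fun t => lam₁ ^ d * g (c * t) := funext hkey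
    have hDE : D = lam₁ ^ d * (D * c) := by
      rw [heqfun] at h1
      exact h1.unique h2
    have hlD' : lineDeriv ℂ f v₁ v₂ = D := rfl
    rw [hlD', zpow_sub₀ hl1, zpow_one, zpow_natCast, div_mul_eq_mul_div,
      eq_div_iff (pow_ne_zero d hl1)]
    rw [hc] at hDE
    field_simp at hDE
    linear_combination -hDE
end

section
/- Let C be a finite subgroup of GL(X) for a complex vector space X of dimension l, and suppose ℂ[X]^C is a polynomial algebra generated by algebraically independent homogeneous polynomials g₁,…,g_l of degrees e₁,…,e_l. If ρ: ℂ[V]^W → ℂ[X]^C is a surjective degree-preserving homomorphism of graded algebras, where ℂ[V]^W is a polynomial algebra on homogeneous generators of degrees d₁,…,d_r, then the multiset {e₁− 1,…,e_l − 1} is a sub-multiset of {d₁ − 1, …, d_r − 1}. -/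
open MvPolynomial

noncomputable abbrev Lmap (l : ℕ) : MvPolynomial (Fin l) ℂ →ₗ[ℂ] (Fin l → ℂ) :=
  LinearMap.pi fun j => lcoeff ℂ (Finsupp.single j 1)

lemma Lmap_X (l : ℕ) (j : Fin l) : Lmap l (X j) = Pi.single j 1 := by
  funext k
  simp only [Lmap, LinearMap.pi_apply, lcoeff_apply, coeff_X']
  rw [Pi.single_apply]
  by_cases h : k = j
  · subst h; simp
  · rw [if_neg h, if_neg (by simpa [Finsupp.single_left_inj] using Ne.symm h)]

lemma coeff_single_mul {l : ℕ} {p q : MvPolynomial (Fin l) ℂ}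
    (hp : coeff 0 p = 0) (hq : coeff 0 q = 0) (j : Fin l) :
    coeff (Finsupp.single j 1) (p * q) = 0 := by
  rw [coeff_mul]
  apply Finset.sum_eq_zero
  rintro ⟨a, b⟩ hab
  rw [Finset.HasAntidiagonal.mem_antidiagonal] at hab
  have hj : a j + b j = 1 := by
    have := DFunLike.congr_fun hab j
    simpa using this
  have hne : ∀ k, k ≠ j → a k = 0 ∧ b k = 0 := by
    intro k hk
    have h2 := DFunLike.congr_fun hab k
    simp only [Finsupp.add_apply, Finsupp.single_apply, if_neg (Ne.symm hk)] at h2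
    omega
  rcases Nat.eq_zero_or_pos (a j) with h | h
  · have ha : a = 0 := by
      ext k
      by_cases hk : k = j
      · subst hk; exact h
      · exact (hne k hk).1
    show coeff a p * coeff b q = 0
    simp [ha, hp]
  · have hb : b = 0 := by
      ext k
      by_cases hk : k = j
      · subst hk; simp only [Finsupp.coe_zero, Pi.zero_apply]; omega
      · exact (hne k hk).2
    show coeff a p * coeff b q = 0
    simp [hb, hq]

lemma ker_pow_two_coeff {l : ℕ} (z : MvPolynomial (Fin l) ℂ)
    (hz : z ∈ (RingHom.ker (constantCoeff : MvPolynomial (Fin l) ℂ →+* ℂ)) ^ 2)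
    (j : Fin l) : coeff (Finsupp.single j 1) z = 0 := by
  rw [sq] at hz
  refine Submodule.mul_induction_on hz ?_ ?_
  · intro p hp q hq
    rw [RingHom.mem_ker] at hp hq
    exact coeff_single_mul (by simpa [constantCoeff_eq] using hp) (by simpa [constantCoeff_eq] using hq) j
  · intro x y hx hy
    rw [coeff_add, hx, hy, add_zero]

lemma prod_mem_ker_pow {l r : ℕ} (x : Fin r → MvPolynomial (Fin l) ℂ)
    (hx : ∀ i, x i ∈ RingHom.ker (constantCoeff : MvPolynomial (Fin l) ℂ →+* ℂ))
    (m : Fin r →₀ ℕ) :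
    (m.prod fun i k => x i ^ k) ∈
      (RingHom.ker (constantCoeff : MvPolynomial (Fin l) ℂ →+* ℂ)) ^ (m.sum fun _ k => k) := by
  induction m using Finsupp.induction with
  | zero => simp
  | single_add a b f ha hb ih =>
      rw [Finsupp.prod_add_index' (fun i => pow_zero (x i)) (fun i b1 b2 => pow_add (x i) b1 b2),
        Finsupp.sum_add_index' (fun i => rfl) (fun i b1 b2 => rfl),
        Finsupp.prod_single_index (h := fun i k => x i ^ k) (pow_zero (x a)),
        Finsupp.sum_single_index (h := fun _ k => k) rfl, pow_add]
      exact Ideal.mul_mem_mul (Ideal.pow_mem_pow (hx a) b) ih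

lemma lift_homog {r l : ℕ} (d : Fin r → ℕ) (e : Fin l → ℕ)
    (ρ : MvPolynomial (Fin r) ℂ →ₐ[ℂ] MvPolynomial (Fin l) ℂ)
    (hsurj : Function.Surjective ρ)
    (hgraded : ∀ (n : ℕ) (f : MvPolynomial (Fin r) ℂ),
      f.IsWeightedHomogeneous d n → (ρ f).IsWeightedHomogeneous e n)
    (n : ℕ) (q : MvPolynomial (Fin l) ℂ) (hq : q.IsWeightedHomogeneous e n) :
    ∃ f, f.IsWeightedHomogeneous d n ∧ ρ f = q := by
  obtain ⟨g, hg⟩ := hsurj q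
  refine ⟨weightedHomogeneousComponent d n g,
    weightedHomogeneousComponent_isWeightedHomogeneous n g, ?_⟩
  have hfin := weightedHomogeneousComponent_finsupp (w := d) g
  have h1 : ρ g = ∑ᶠ m, ρ (weightedHomogeneousComponent d m g) := by
    conv_lhs => rw [← sum_weightedHomogeneousComponent d g]
    exact AddMonoidHom.map_finsum (ρ.toLinearMap.toAddMonoidHom) hfin
  have hfin2 : (Function.support fun m =>
      weightedHomogeneousComponent e n (ρ (weightedHomogeneousComponent d m g))).Finite := by
    apply hfin.subset
    intro m hm
    simp only [Function.mem_support] at hm ⊢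
    intro h0
    apply hm
    rw [h0, map_zero, map_zero]
  have h2 : weightedHomogeneousComponent e n (ρ g)
      = ∑ᶠ m, weightedHomogeneousComponent e n (ρ (weightedHomogeneousComponent d m g)) := by
    rw [h1]
    refine AddMonoidHom.map_finsum (weightedHomogeneousComponent e n).toAddMonoidHom ?_
    apply hfin.subset
    intro m hm
    simp only [Function.mem_support] at hm ⊢
    intro h0
    exact hm (by rw [h0, map_zero])
  have h3 : weightedHomogeneousComponent e n (ρ g) = ρ (weightedHomogeneousComponent d n g) := by
    rw [h2, finsum_eq_single _ n]
    · exact ((hgraded n _ (weightedHomogeneousComponent_isWeightedHomogeneous n g))).weightedHomogeneousComponent_same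
    · intro m hm
      exact ((hgraded m _
        (weightedHomogeneousComponent_isWeightedHomogeneous m g))).weightedHomogeneousComponent_ne n hm.symm
  rw [← h3, hg, hq.weightedHomogeneousComponent_same]

lemma span_lemma {r l : ℕ} (d : Fin r → ℕ) (e : Fin l → ℕ) (hd : ∀ i, 0 < d i)
    (ρ : MvPolynomial (Fin r) ℂ →ₐ[ℂ] MvPolynomial (Fin l) ℂ)
    (hgraded : ∀ (n : ℕ) (f : MvPolynomial (Fin r) ℂ),
      f.IsWeightedHomogeneous d n → (ρ f).IsWeightedHomogeneous e n)
    (n : ℕ) (hn : 0 < n) (f : MvPolynomial (Fin r) ℂ)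
    (hf : f.IsWeightedHomogeneous d n) :
    Lmap l (ρ f) ∈ Submodule.span ℂ ((fun i => Lmap l (ρ (X i))) '' {i | d i = n}) := by
  have hker : ∀ i, ρ (X i) ∈ RingHom.ker (constantCoeff : MvPolynomial (Fin l) ℂ →+* ℂ) := by
    intro i
    rw [RingHom.mem_ker]
    by_contra hc
    have h0 := (hgraded (d i) (X i) (isWeightedHomogeneous_X ℂ d i))
      (d := 0) (by simpa [← constantCoeff_eq] using hc)
    rw [map_zero] at h0
    exact (hd i).ne h0
  have hrw : Lmap l (ρ f) = ∑ m ∈ f.support, Lmap l (ρ (monomial m (coeff m f))) := by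
    conv_lhs => rw [f.as_sum]
    rw [map_sum, map_sum]
  rw [hrw]
  apply Submodule.sum_mem
  intro m hm
  have hw : Finsupp.weight d m = n := hf (mem_support_iff.mp hm)
  have key : ρ (monomial m (coeff m f)) = coeff m f • (m.prod fun i k => ρ (X i) ^ k) := by
    rw [monomial_eq, map_mul, ← MvPolynomial.algebraMap_eq, AlgHom.commutes,
      MvPolynomial.algebraMap_eq, ← smul_eq_C_mul]
    congr 1
    rw [Finsupp.prod, Finsupp.prod, map_prod]
    exact Finset.prod_congr rfl fun i _ => map_pow ρ _ _
  rw [key, map_smul]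
  apply Submodule.smul_mem
  set s := m.sum fun _ k => k with hs_def
  have hm0 : m ≠ 0 := by
    intro h
    rw [h, map_zero] at hw
    exact hn.ne hw
  have hs_sum : s = ∑ k ∈ m.support, m k := rfl
  have hs1 : 1 ≤ s := by
    obtain ⟨i, hmi⟩ := Finsupp.support_nonempty_iff.mpr hm0
    have h1 : m i ≤ ∑ k ∈ m.support, m k :=
      Finset.single_le_sum (f := fun k => m k) (by simp) hmi
    have h2 : 1 ≤ m i := Nat.one_le_iff_ne_zero.mpr (Finsupp.mem_support_iff.mp hmi)
    omega
  by_cases hs2 : 2 ≤ s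
  · have hz : Lmap l (m.prod fun i k => ρ (X i) ^ k) = 0 := by
      funext j
      exact ker_pow_two_coeff _
        (Ideal.pow_le_pow_right hs2 (prod_mem_ker_pow _ hker m)) j
    rw [hz]
    exact Submodule.zero_mem _
  · have hs : s = 1 := by omega
    obtain ⟨i, hmi⟩ := Finsupp.support_nonempty_iff.mpr hm0
    have hsum : ∑ k ∈ m.support, m k = 1 := by
      rw [← hs_sum, hs]
    have hi1 : m i = 1 := by
      have h1 : m i ≤ 1 := hsum ▸ Finset.single_le_sum (f := fun k => m k) (by simp) hmi
      have h2 : 1 ≤ m i := Nat.one_le_iff_ne_zero.mpr (Finsupp.mem_support_iff.mp hmi)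
      omega
    have hk0 : ∀ k, k ≠ i → m k = 0 := by
      intro k hk
      by_contra hk'
      have hks : k ∈ m.support := Finsupp.mem_support_iff.mpr hk'
      have hsub : ({i, k} : Finset (Fin r)) ⊆ m.support := by
        intro x hx
        rcases Finset.mem_insert.mp hx with h | h
        · exact h ▸ hmi
        · exact (Finset.mem_singleton.mp h) ▸ hks
      have := Finset.sum_le_sum_of_subset (f := fun k => m k) hsub
      rw [Finset.sum_pair (Ne.symm hk), hsum] at this
      omega
    have hm_eq : m = Finsupp.single i 1 := by
      ext k
      rw [Finsupp.single_apply]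
      by_cases hk : i = k
      · rw [if_pos hk, ← hk, hi1]
      · rw [if_neg hk]
        exact hk0 k (fun h => hk h.symm)
    have hdi : d i = n := by
      rw [hm_eq, Finsupp.weight_apply, Finsupp.sum_single_index (by simp), one_smul] at hw
      exact hw
    have hprod : (m.prod fun i k => ρ (X i) ^ k) = ρ (X i) := by
      rw [hm_eq, Finsupp.prod_single_index (h := fun i k => ρ (X i) ^ k) (pow_zero _), pow_one]
    rw [hprod]
    exact Submodule.subset_span ⟨i, hdi, rfl⟩

lemma count_lemma {r l : ℕ} (d : Fin r → ℕ) (e : Fin l → ℕ)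
    (hd : ∀ i, 0 < d i) (he : ∀ i, 0 < e i)
    (ρ : MvPolynomial (Fin r) ℂ →ₐ[ℂ] MvPolynomial (Fin l) ℂ)
    (hsurj : Function.Surjective ρ)
    (hgraded : ∀ (n : ℕ) (f : MvPolynomial (Fin r) ℂ),
      f.IsWeightedHomogeneous d n → (ρ f).IsWeightedHomogeneous e n)
    (n : ℕ) (hn : 0 < n) :
    (Finset.univ.filter fun j : Fin l => e j = n).card
      ≤ (Finset.univ.filter fun i : Fin r => d i = n).card := by
  classical
  set A : Finset (Fin r) := Finset.univ.filter fun i => d i = n with hA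
  set B : Finset (Fin l) := Finset.univ.filter fun j => e j = n with hB
  set S : Finset (Fin l → ℂ) := A.image fun i => Lmap l (ρ (X i)) with hS
  set V : Submodule ℂ (Fin l → ℂ) := Submodule.span ℂ (S : Set (Fin l → ℂ)) with hV
  have hScoe : (S : Set (Fin l → ℂ)) = (fun i => Lmap l (ρ (X i))) '' {i | d i = n} := by
    rw [hS, Finset.coe_image, hA]
    congr 1
    ext i
    simp
  haveI : FiniteDimensional ℂ V := FiniteDimensional.span_of_finite ℂ S.finite_toSet
  have hfr : Module.finrank ℂ V ≤ A.card :=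
    le_trans (finrank_span_finset_le_card S) (Finset.card_image_le)
  have hmem : ∀ j : Fin l, e j = n → Pi.single j (1 : ℂ) ∈ V := by
    intro j hj
    obtain ⟨f, hf, hρf⟩ := lift_homog d e ρ hsurj hgraded n (X j)
      (hj ▸ isWeightedHomogeneous_X ℂ e j)
    have := span_lemma d e hd ρ hgraded n hn f hf
    rw [hρf, Lmap_X] at this
    rw [hV, hScoe]
    exact this
  have hli0 : LinearIndependent ℂ (fun j : Fin l => Pi.single j (1 : ℂ)) := by
    have := (Pi.basisFun ℂ (Fin l)).linearIndependent
    rwa [show ⇑(Pi.basisFun ℂ (Fin l)) = fun j => Pi.single j (1 : ℂ) from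
      funext fun j => Pi.basisFun_apply ℂ (Fin l) j] at this
  set v : {j // j ∈ B} → V := fun j =>
    ⟨Pi.single j.1 (1 : ℂ), hmem j.1 ((Finset.mem_filter.mp j.2).2)⟩ with hv
  have hli : LinearIndependent ℂ v := by
    have h2 := hli0.comp (Subtype.val : {j // j ∈ B} → Fin l) Subtype.val_injective
    exact LinearIndependent.of_comp V.subtype h2
  calc B.card = Fintype.card {j // j ∈ B} := (Fintype.card_coe B).symm
    _ ≤ Module.finrank ℂ V := hli.fintype_card_le_finrank
    _ ≤ A.card := hfr

/-- model the polynomial algebras `ℂ[V]^W` and `ℂ[X]^C` as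
weighted polynomial rings on generators of degrees `d₁,…,d_r` resp.
`e₁,…,e_l`.  If `ρ` is a surjective degree-preserving (for the weighted
gradings) `ℂ`-algebra homomorphism, then the multiset `{e₁-1,…,e_l-1}` is a
sub-multiset of `{d₁-1,…,d_r-1}`. -/
theorem stmt11 (r l : ℕ) (d : Fin r → ℕ) (e : Fin l → ℕ)
    (hd : ∀ i, 0 < d i) (he : ∀ i, 0 < e i)
    (ρ : MvPolynomial (Fin r) ℂ →ₐ[ℂ] MvPolynomial (Fin l) ℂ)
    (hsurj : Function.Surjective ρ)
    (hgraded : ∀ (n : ℕ) (f : MvPolynomial (Fin r) ℂ),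
      f.IsWeightedHomogeneous d n → (ρ f).IsWeightedHomogeneous e n) :
    (Finset.univ.val.map fun i : Fin l => e i - 1)
      ≤ (Finset.univ.val.map fun i : Fin r => d i - 1) := by
  classical
  rw [Multiset.le_iff_count]
  intro k
  rw [Multiset.count_map, Multiset.count_map]
  have h1 : (Finset.univ.val.filter fun j : Fin l => k = e j - 1)
      = (Finset.univ.filter fun j : Fin l => e j = k + 1).val := by
    rw [Finset.filter_val]
    apply Multiset.filter_congr
    intro j _
    have := he j
    omega
  have h2 : (Finset.univ.val.filter fun i : Fin r => k = d i - 1)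
      = (Finset.univ.filter fun i : Fin r => d i = k + 1).val := by
    rw [Finset.filter_val]
    apply Multiset.filter_congr
    intro i _
    have := hd i
    omega
  rw [h1, h2]
  exact count_lemma d e hd he ρ hsurj hgraded (k + 1) (Nat.succ_pos k)
end
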